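/- Fix p ∈ [1,∞), n ∈ ℕ, and let x_1,…,x_n ∈ L_p(μ) for a probability measure μ. Let L = max_{i∈{1,…,n}} ‖x_i‖_{L_∞(μ)} and assume L < ∞. Then for every ε ∈ (0,1) there exists d ∈ ℕ with d ≤ 32·e²·(2L)^{2p}·(log n)/ε² and points y_1,…,y_n ∈ ℓ_p^d such that for all i,j ∈ {1,…,n}: ‖x_i − x_j‖_{L_p(μ)}^p − ε ≤ ‖y_i − y_j‖_{ℓ_p^d}^p ≤ ‖x_i − x_j‖_{L_p(μ)}^p + ε. -/

import Mathlib

open MeasureTheory Real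

open MeasureTheory Real

private lemma exp_le_add_exp_sq (x : ℝ) : Real.exp x ≤ x + Real.exp (x ^ 2) := by
  have hexp : (1 : ℝ) + x ^ 2 ≤ Real.exp (x ^ 2) := by
    have := Real.add_one_le_exp (x ^ 2); linarith
  rcases le_or_gt |x| 1 with h | h
  · have h2 := Real.abs_exp_sub_one_sub_id_le h
    have h3 : Real.exp x - 1 - x ≤ x ^ 2 := (abs_le.1 h2).2
    linarith
  · rcases le_or_gt 0 x with hx | hx
    · have hx1 : 1 ≤ x := by rw [abs_of_nonneg hx] at h; linarith
      have : x ≤ x ^ 2 := by nlinarith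
      have := Real.exp_le_exp.2 this
      linarith
    · have hx1 : x < -1 := by
        rw [abs_of_neg hx] at h; linarith
      have h1 : Real.exp x ≤ 1 := by
        calc Real.exp x ≤ Real.exp 0 := Real.exp_le_exp.2 hx.le
        _ = 1 := Real.exp_zero
      nlinarith

private lemma mgf_le_aux {Ω : Type*} [MeasurableSpace Ω] (μ : Measure Ω) [IsProbabilityMeasure μ]
    {g : Ω → ℝ} (hg : Measurable g) {M : ℝ} (hM : 0 ≤ M) (t : ℝ)
    (hb : ∀ᵐ ω ∂μ, |g ω| ≤ M) (h0 : ∫ ω, g ω ∂μ = 0) :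
    ∫ ω, Real.exp (t * g ω) ∂μ ≤ Real.exp (t ^ 2 * M ^ 2) := by
  have hgint : Integrable g μ :=
    ⟨hg.aestronglyMeasurable, HasFiniteIntegral.of_bounded (C := M) (by
      filter_upwards [hb] with ω hω using by simpa using hω)⟩
  have hlhs : Integrable (fun ω => Real.exp (t * g ω)) μ := by
    refine ⟨(Real.measurable_exp.comp (hg.const_mul t)).aestronglyMeasurable,
      HasFiniteIntegral.of_bounded (C := Real.exp (|t| * M)) ?_⟩
    filter_upwards [hb] with ω hω
    rw [Real.norm_eq_abs, abs_of_pos (Real.exp_pos _)]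
    refine Real.exp_le_exp.2 ?_
    calc t * g ω ≤ |t * g ω| := le_abs_self _
    _ = |t| * |g ω| := abs_mul _ _
    _ ≤ |t| * M := by gcongr
  have hrhs : Integrable (fun ω => t * g ω + Real.exp (t ^ 2 * M ^ 2)) μ :=
    (hgint.const_mul t).add (integrable_const _)
  have hmono : ∫ ω, Real.exp (t * g ω) ∂μ ≤ ∫ ω, (t * g ω + Real.exp (t ^ 2 * M ^ 2)) ∂μ := by
    refine integral_mono_ae hlhs hrhs ?_
    filter_upwards [hb] with ω hω
    have h1 := exp_le_add_exp_sq (t * g ω)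
    have h2 : (t * g ω) ^ 2 ≤ t ^ 2 * M ^ 2 := by
      have : |g ω| ^ 2 ≤ M ^ 2 := by nlinarith [abs_nonneg (g ω)]
      calc (t * g ω) ^ 2 = t ^ 2 * |g ω| ^ 2 := by rw [mul_pow, sq_abs]
      _ ≤ t ^ 2 * M ^ 2 := by nlinarith [sq_nonneg t]
    have := Real.exp_le_exp.2 h2
    linarith
  calc ∫ ω, Real.exp (t * g ω) ∂μ ≤ ∫ ω, (t * g ω + Real.exp (t ^ 2 * M ^ 2)) ∂μ := hmono
  _ = t * ∫ ω, g ω ∂μ + Real.exp (t ^ 2 * M ^ 2) := by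
      rw [integral_add (hgint.const_mul t) (integrable_const _), integral_const_mul,
        integral_const, probReal_univ, one_smul]
  _ = Real.exp (t ^ 2 * M ^ 2) := by rw [h0]; ring


private lemma ae_pi_eval {Ω : Type*} [MeasurableSpace Ω] {μ : Measure Ω}
    [SigmaFinite μ] {P : Ω → Prop} (h : ∀ᵐ ω ∂μ, P ω) (d : ℕ) (s : Fin d) :
    ∀ᵐ v ∂(Measure.pi fun _ : Fin d => μ), P (v s) := by
  haveI : ∀ i : Fin d, SigmaFinite ((fun _ : Fin d => μ) i) := fun _ => inferInstance
  rw [ae_iff] at h ⊢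
  exact Measure.pi_eval_preimage_null (μ := fun _ : Fin d => μ) (i := s) h

set_option maxHeartbeats 1000000 in
private lemma chernoff_aux {Ω : Type*} [MeasurableSpace Ω] (μ : Measure Ω)
    [IsProbabilityMeasure μ] {g : Ω → ℝ} (hg : Measurable g) {M ε : ℝ}
    (hM : 0 < M) (hε : 0 < ε) (hb : ∀ᵐ ω ∂μ, |g ω| ≤ M) (h0 : ∫ ω, g ω ∂μ = 0) (d : ℕ) :
    (Measure.pi fun _ : Fin d => μ) {v | (d : ℝ) * ε ≤ ∑ s, g (v s)} ≤
      ENNReal.ofReal (Real.exp (-((d : ℝ) * ε ^ 2 / (4 * M ^ 2)))) := by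
  set t : ℝ := ε / (2 * M ^ 2) with ht_def
  have ht : 0 < t := by positivity
  set mp : Measure (Fin d → Ω) := Measure.pi fun _ : Fin d => μ with hmp
  set V : (Fin d → Ω) → ℝ := fun v => Real.exp (t * ∑ s, g (v s)) with hV
  have hVmeas : Measurable V := by
    apply Real.measurable_exp.comp
    exact (Finset.measurable_sum Finset.univ fun s _ => hg.comp (measurable_pi_apply s)).const_mul t
  have hbae : ∀ᵐ v ∂mp, ∀ s : Fin d, |g (v s)| ≤ M :=
    (MeasureTheory.ae_all_iff).2 fun s => ae_pi_eval hb d s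
  have hVint : Integrable V mp := by
    refine ⟨hVmeas.aestronglyMeasurable,
      HasFiniteIntegral.of_bounded (C := Real.exp (t * (d * M))) ?_⟩
    filter_upwards [hbae] with v hv
    rw [Real.norm_eq_abs, abs_of_pos (Real.exp_pos _)]
    refine Real.exp_le_exp.2 (by
      refine mul_le_mul_of_nonneg_left ?_ ht.le
      calc ∑ s, g (v s) ≤ ∑ s : Fin d, M := Finset.sum_le_sum fun s _ => (abs_le.1 (hv s)).2
      _ = d * M := by simp [mul_comm])
  -- integral of V equals (mgf)^d
  letI : MeasureSpace Ω := ⟨μ⟩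
  haveI : IsProbabilityMeasure (volume : Measure Ω) := (inferInstance : IsProbabilityMeasure μ)
  haveI : SigmaFinite (volume : Measure Ω) := inferInstance
  have hmpvol : mp = (volume : Measure (Fin d → Ω)) := by
    rw [MeasureTheory.volume_pi]; rfl
  have hVeq : ∫ v, V v ∂mp = (∫ ω, Real.exp (t * g ω) ∂μ) ^ d := by
    have h1 : ∀ v : Fin d → Ω, V v = ∏ s : Fin d, Real.exp (t * g (v s)) := by
      intro v
      simp only [hV, Finset.mul_sum, Real.exp_sum]
    calc ∫ v, V v ∂mp = ∫ v : Fin d → Ω, ∏ s : Fin d, Real.exp (t * g (v s)) := by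
          rw [hmpvol]; exact integral_congr_ae (Filter.Eventually.of_forall h1)
    _ = (∫ ω, Real.exp (t * g ω) ∂μ) ^ (Fintype.card (Fin d)) :=
          MeasureTheory.integral_fintype_prod_eq_pow (ι := Fin d) (fun ω => Real.exp (t * g ω))
    _ = (∫ ω, Real.exp (t * g ω) ∂μ) ^ d := by rw [Fintype.card_fin]
  have hmgf := mgf_le_aux μ hg hM.le t hb h0
  have hVle : ∫ v, V v ∂mp ≤ Real.exp (t ^ 2 * M ^ 2) ^ d := by
    rw [hVeq]
    exact pow_le_pow_left₀ (integral_nonneg fun ω => (Real.exp_pos _).le) hmgf d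
  -- Markov
  set a : ℝ := Real.exp (t * ((d : ℝ) * ε)) with ha
  have hVnn : 0 ≤ᵐ[mp] V := Filter.Eventually.of_forall fun v => (Real.exp_pos _).le
  have hmarkov : a * (mp {v | a ≤ V v}).toReal ≤ ∫ v, V v ∂mp :=
    mul_meas_ge_le_integral_of_nonneg hVnn hVint a
  have hsub : {v : Fin d → Ω | (d : ℝ) * ε ≤ ∑ s, g (v s)} ⊆ {v | a ≤ V v} := by
    intro v hv
    exact Real.exp_le_exp.2 (mul_le_mul_of_nonneg_left hv ht.le)
  have hfin : mp {v | a ≤ V v} ≠ ⊤ := measure_ne_top _ _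
  have hkey : (mp {v | a ≤ V v}).toReal ≤ Real.exp (-((d : ℝ) * ε ^ 2 / (4 * M ^ 2))) := by
    have ha0 : 0 < a := Real.exp_pos _
    have h2 : (mp {v | a ≤ V v}).toReal ≤ (Real.exp (t ^ 2 * M ^ 2) ^ d) / a := by
      rw [le_div_iff₀ ha0]
      calc (mp {v | a ≤ V v}).toReal * a = a * (mp {v | a ≤ V v}).toReal := mul_comm _ _
      _ ≤ ∫ v, V v ∂mp := hmarkov
      _ ≤ _ := hVle
    refine h2.trans (le_of_eq ?_)
    rw [← Real.exp_nat_mul, ha, ← Real.exp_sub]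
    congr 1
    have hM2 : (M : ℝ) ^ 2 ≠ 0 := by positivity
    rw [ht_def]; field_simp
    ring
  calc mp {v | (d : ℝ) * ε ≤ ∑ s, g (v s)} ≤ mp {v | a ≤ V v} := measure_mono hsub
  _ ≤ ENNReal.ofReal (Real.exp (-((d : ℝ) * ε ^ 2 / (4 * M ^ 2)))) := by
      rw [← ENNReal.ofReal_toReal hfin]
      exact ENNReal.ofReal_le_ofReal hkey


set_option maxHeartbeats 1000000 in
/-- **Proposition 2.2 (dimension reduction in `L_p(μ)` for uniformly bounded vectors).**
Fix `p ∈ [1,∞)`, `n ∈ ℕ` and `x₁, …, xₙ ∈ L_p(μ)` for a probability measure `μ`.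
Let `L = max_i ‖x_i‖_{L_∞(μ)} < ∞`.  Then for every `ε ∈ (0,1)` there exists
`d ≤ 32 e² (2L)^{2p} (log n)/ε²` and `y₁, …, yₙ ∈ ℓ_p^d` with
`‖x_i - x_j‖_{L_p(μ)}^p - ε ≤ ‖y_i - y_j‖_{ℓ_p^d}^p ≤ ‖x_i - x_j‖_{L_p(μ)}^p + ε`. -/
theorem bounded_dimension_reduction
    (p : ℝ) (hp : 1 ≤ p) (n : ℕ)
    {Ω : Type*} [MeasurableSpace Ω] (μ : Measure Ω) [IsProbabilityMeasure μ]
    (x : Fin n → Ω → ℝ) (hmeas : ∀ i, AEStronglyMeasurable (x i) μ)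
    (L : ENNReal) (hL : L = Finset.univ.sup fun i => eLpNorm (x i) ⊤ μ)
    (hLfin : L ≠ ⊤)
    (ε : ℝ) (hε : ε ∈ Set.Ioo (0 : ℝ) 1) :
    ∃ (d : ℕ) (y : Fin n → Fin d → ℝ),
      (d : ℝ) ≤ 32 * Real.exp 1 ^ 2 * (2 * L.toReal) ^ (2 * p) * Real.log n / ε ^ 2 ∧
      ∀ i j, (∫ ω, |x i ω - x j ω| ^ p ∂μ) - ε ≤ ∑ s, |y i s - y j s| ^ p ∧
        ∑ s, |y i s - y j s| ^ p ≤ (∫ ω, |x i ω - x j ω| ^ p ∂μ) + ε := by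
  obtain ⟨hε0, hε1⟩ := hε
  have hp0 : p ≠ 0 := by linarith
  set Lr : ℝ := L.toReal with hLr_def
  have hLr0 : 0 ≤ Lr := ENNReal.toReal_nonneg
  set M : ℝ := (2 * Lr) ^ p with hM_def
  have hM0 : 0 ≤ M := Real.rpow_nonneg (by positivity) p
  set z : Fin n → Ω → ℝ := fun i => (hmeas i).mk (x i) with hz_def
  have hzm : ∀ i, Measurable (z i) := fun i => (hmeas i).stronglyMeasurable_mk.measurable
  have hzae : ∀ i, x i =ᵐ[μ] z i := fun i => (hmeas i).ae_eq_mk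
  have hzb : ∀ i, ∀ᵐ ω ∂μ, |z i ω| ≤ Lr := by
    intro i
    have h1 : eLpNormEssSup (z i) μ ≤ L := by
      rw [← eLpNorm_exponent_top, eLpNorm_congr_ae (hzae i).symm, hL]
      exact Finset.le_sup (f := fun i => eLpNorm (x i) ⊤ μ) (Finset.mem_univ i)
    filter_upwards [ae_le_eLpNormEssSup (μ := μ) (f := z i)] with ω hω
    have h3 : (‖z i ω‖₊ : ENNReal) ≤ L := le_trans hω h1
    have h4 := ENNReal.toReal_mono hLfin h3
    simpa [Real.norm_eq_abs] using h4
  have hall : ∀ᵐ ω ∂μ, ∀ i, |z i ω| ≤ Lr := (MeasureTheory.ae_all_iff).2 hzb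
  set f : Fin n → Fin n → Ω → ℝ := fun i j ω => |z i ω - z j ω| ^ p with hf_def
  have hfm : ∀ i j, Measurable (f i j) := fun i j =>
    (Real.continuous_rpow_const (by linarith)).measurable.comp (((hzm i).sub (hzm j)).abs)
  have hfb : ∀ᵐ ω ∂μ, ∀ i j, 0 ≤ f i j ω ∧ f i j ω ≤ M := by
    filter_upwards [hall] with ω hω i j
    refine ⟨Real.rpow_nonneg (abs_nonneg _) p, ?_⟩
    have h1 : |z i ω - z j ω| ≤ 2 * Lr := by
      calc |z i ω - z j ω| ≤ |z i ω| + |z j ω| := abs_sub _ _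
      _ ≤ 2 * Lr := by have := hω i; have := hω j; linarith
    exact Real.rpow_le_rpow (abs_nonneg _) h1 (by linarith)
  have hfint : ∀ i j, Integrable (f i j) μ := fun i j =>
    ⟨(hfm i j).aestronglyMeasurable, HasFiniteIntegral.of_bounded (C := M) (by
      filter_upwards [hfb] with ω hω
      rw [Real.norm_eq_abs, abs_of_nonneg (hω i j).1]; exact (hω i j).2)⟩
  set c : Fin n → Fin n → ℝ := fun i j => ∫ ω, f i j ω ∂μ with hc_def
  have hc0 : ∀ i j, 0 ≤ c i j := fun i j =>
    integral_nonneg_of_ae (by filter_upwards [hfb] with ω hω using (hω i j).1)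
  have hcM : ∀ i j, c i j ≤ M := fun i j => by
    have h1 : c i j ≤ ∫ _, M ∂μ := integral_mono_ae (hfint i j) (integrable_const _)
      (by filter_upwards [hfb] with ω hω using (hω i j).2)
    simpa using h1
  have hcx : ∀ i j, ∫ ω, |x i ω - x j ω| ^ p ∂μ = c i j := fun i j =>
    integral_congr_ae (by filter_upwards [hzae i, hzae j] with ω h1 h2; rw [h1, h2])
  have hcd : ∀ i, c i i = 0 := by
    intro i
    have : ∀ ω, f i i ω = 0 := fun ω => by
      simp [hf_def, sub_self, abs_zero, Real.zero_rpow hp0]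
    simp [hc_def, this]
  have hlogn : 0 ≤ Real.log n := by
    rcases Nat.eq_zero_or_pos n with h | h
    · simp [h]
    · exact Real.log_nonneg (by exact_mod_cast h)
  by_cases hsmall : ∀ i j, c i j ≤ ε
  · refine ⟨0, fun _ _ => 0, ?_, ?_⟩
    · simp only [Nat.cast_zero]
      apply div_nonneg _ (by positivity)
      apply mul_nonneg _ hlogn
      positivity
    · intro i j
      simp only [hcx, Finset.univ_eq_empty, Finset.sum_empty]
      exact ⟨by linarith [hsmall i j], by linarith [hc0 i j]⟩
  · push_neg at hsmall
    obtain ⟨i₀, j₀, hij⟩ := hsmall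
    have hεM : ε < M := lt_of_lt_of_le hij (hcM i₀ j₀)
    have hMpos : 0 < M := lt_trans hε0 hεM
    have hn2 : 2 ≤ n := by
      by_contra h
      push_neg at h
      have : i₀ = j₀ := by
        have h1 := i₀.isLt; have h2 := j₀.isLt
        exact Fin.ext (by omega)
      rw [this, hcd j₀] at hij
      linarith
    have hn0 : (0 : ℝ) < n := by
      have : (2 : ℝ) ≤ n := by exact_mod_cast hn2
      linarith
    have he2 : (7 : ℝ) < Real.exp 1 ^ 2 := by nlinarith [Real.exp_one_gt_d9]
    have hlog2n : (0.6931471803 : ℝ) < Real.log n :=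
      lt_of_lt_of_le Real.log_two_gt_d9
        (Real.log_le_log (by norm_num) (by exact_mod_cast hn2))
    set D : ℝ := 32 * Real.exp 1 ^ 2 * (2 * Lr) ^ (2 * p) * Real.log n / ε ^ 2 with hD_def
    have hM2 : (2 * Lr) ^ (2 * p) = M ^ 2 := by
      rw [mul_comm (2 : ℝ) p, Real.rpow_mul (by positivity), hM_def, Real.rpow_two]
    have hD_eq : D = 32 * Real.exp 1 ^ 2 * M ^ 2 * Real.log n / ε ^ 2 := by
      rw [hD_def, hM2]
    have hKgt : 1 < M ^ 2 / ε ^ 2 := by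
      rw [lt_div_iff₀ (by positivity)]
      nlinarith
    have hD_big : (154 : ℝ) ≤ D := by
      rw [hD_eq]
      have h1 : 32 * Real.exp 1 ^ 2 * M ^ 2 * Real.log n / ε ^ 2
          = (32 * Real.exp 1 ^ 2 * Real.log n) * (M ^ 2 / ε ^ 2) := by ring
      rw [h1]
      have h2 : (154 : ℝ) ≤ 32 * Real.exp 1 ^ 2 * Real.log n := by nlinarith
      nlinarith
    have hD0 : 0 ≤ D := by linarith
    set d : ℕ := ⌊D⌋₊ with hd_def
    have hdD : (d : ℝ) ≤ D := Nat.floor_le hD0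
    have hDd : D - 1 < (d : ℝ) := Nat.sub_one_lt_floor D
    have hd0 : (0 : ℝ) < d := by linarith
    -- the centered functions
    set g : Fin n → Fin n → Ω → ℝ := fun i j ω => f i j ω - c i j with hg_def
    have hgm : ∀ i j, Measurable (g i j) := fun i j => (hfm i j).sub measurable_const
    have hgb : ∀ i j, ∀ᵐ ω ∂μ, |g i j ω| ≤ M := by
      intro i j
      filter_upwards [hfb] with ω hω
      have h1 := (hω i j).1; have h2 := (hω i j).2
      have h3 := hc0 i j; have h4 := hcM i j
      have : g i j ω = f i j ω - c i j := rfl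
      rw [this]
      exact abs_le.2 ⟨by linarith, by linarith⟩
    have hg0 : ∀ i j, ∫ ω, g i j ω ∂μ = 0 := by
      intro i j
      calc ∫ ω, g i j ω ∂μ = ∫ ω, (f i j ω - c i j) ∂μ := rfl
      _ = (∫ ω, f i j ω ∂μ) - c i j := by
          rw [integral_sub (hfint i j) (integrable_const _), integral_const, probReal_univ,
            one_smul]
      _ = 0 := sub_eq_zero_of_eq rfl
    have hgnb : ∀ i j, ∀ᵐ ω ∂μ, |(-(g i j ω))| ≤ M := by
      intro i j; filter_upwards [hgb i j] with ω hω using by rwa [abs_neg]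
    have hgn0 : ∀ i j, ∫ ω, -(g i j ω) ∂μ = 0 := by
      intro i j; rw [integral_neg, hg0, neg_zero]
    set r : ENNReal := ENNReal.ofReal (Real.exp (-((d : ℝ) * ε ^ 2 / (4 * M ^ 2)))) with hr_def
    have hplus : ∀ i j,
        (Measure.pi fun _ : Fin d => μ) {v | (d : ℝ) * ε ≤ ∑ s, g i j (v s)} ≤ r :=
      fun i j => chernoff_aux μ (hgm i j) hMpos hε0 (hgb i j) (hg0 i j) d
    have hminus : ∀ i j,
        (Measure.pi fun _ : Fin d => μ) {v | (d : ℝ) * ε ≤ ∑ s, -(g i j (v s))} ≤ r :=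
      fun i j => chernoff_aux μ (hgm i j).neg hMpos hε0 (hgnb i j) (hgn0 i j) d
    set B : Set (Fin d → Ω) := ⋃ i, ⋃ j,
      ({v | (d : ℝ) * ε ≤ ∑ s, g i j (v s)} ∪ {v | (d : ℝ) * ε ≤ ∑ s, -(g i j (v s))})
      with hB_def
    haveI : IsProbabilityMeasure (Measure.pi fun _ : Fin d => μ) := inferInstance
    have hBle : (Measure.pi fun _ : Fin d => μ) B ≤ (n : ENNReal) * ((n : ENNReal) * (2 * r)) := by
      calc (Measure.pi fun _ : Fin d => μ) B
          ≤ ∑' i : Fin n, (Measure.pi fun _ : Fin d => μ) (⋃ j,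
            ({v | (d : ℝ) * ε ≤ ∑ s, g i j (v s)} ∪ {v | (d : ℝ) * ε ≤ ∑ s, -(g i j (v s))})) :=
            measure_iUnion_le _
      _ ≤ ∑' i : Fin n, ∑' j : Fin n, (Measure.pi fun _ : Fin d => μ)
            ({v | (d : ℝ) * ε ≤ ∑ s, g i j (v s)} ∪ {v | (d : ℝ) * ε ≤ ∑ s, -(g i j (v s))}) :=
            ENNReal.tsum_le_tsum fun i => measure_iUnion_le _
      _ ≤ ∑' _ : Fin n, ∑' _ : Fin n, (2 * r) := by
            refine ENNReal.tsum_le_tsum fun i => ENNReal.tsum_le_tsum fun j => ?_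
            refine le_trans (measure_union_le _ _) ?_
            rw [two_mul]
            exact add_le_add (hplus i j) (hminus i j)
      _ = (n : ENNReal) * ((n : ENNReal) * (2 * r)) := by
            simp [tsum_fintype, Finset.sum_const, Finset.card_univ, nsmul_eq_mul, mul_assoc]
    have hnum : (n : ENNReal) * ((n : ENNReal) * (2 * r)) < 1 := by
      set E : ℝ := -((d : ℝ) * ε ^ 2 / (4 * M ^ 2)) with hE_def
      clear_value E
      have hcoe : (n : ENNReal) * ((n : ENNReal) * (2 * r))
          = ENNReal.ofReal ((n : ℝ) * ((n : ℝ) * (2 * Real.exp E))) := by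
        rw [hr_def, ENNReal.ofReal_mul hn0.le, ENNReal.ofReal_mul hn0.le,
          ENNReal.ofReal_mul (by norm_num), ENNReal.ofReal_natCast, ENNReal.ofReal_ofNat]
      rw [hcoe, ← ENNReal.ofReal_one]
      refine ENNReal.ofReal_lt_ofReal_iff_of_nonneg (by positivity) |>.2 ?_
      -- real inequality
      have hq0 : (0:ℝ) < ε ^ 2 / (4 * M ^ 2) := by positivity
      have hE_le : E ≤ -(8 * Real.exp 1 ^ 2 * Real.log n) + 1 / 4 := by
        have h1 : D * (ε ^ 2 / (4 * M ^ 2)) = 8 * Real.exp 1 ^ 2 * Real.log n := by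
          rw [hD_eq]; field_simp; ring
        have h2 : ε ^ 2 / (4 * M ^ 2) ≤ 1 / 4 := by
          rw [div_le_div_iff₀ (by positivity) (by norm_num)]
          nlinarith
        have h3 : (D - 1) * (ε ^ 2 / (4 * M ^ 2)) ≤ (d : ℝ) * (ε ^ 2 / (4 * M ^ 2)) :=
          mul_le_mul_of_nonneg_right (by linarith) hq0.le
        have h5 : (d : ℝ) * ε ^ 2 / (4 * M ^ 2) = (d : ℝ) * (ε ^ 2 / (4 * M ^ 2)) :=
          mul_div_assoc _ _ _
        have h6 : (D - 1) * (ε ^ 2 / (4 * M ^ 2))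
            = D * (ε ^ 2 / (4 * M ^ 2)) - (ε ^ 2 / (4 * M ^ 2)) := by ring
        rw [hE_def, h5]
        linarith
      calc (n : ℝ) * ((n : ℝ) * (2 * Real.exp E))
          = Real.exp (Real.log 2 + (Real.log n + Real.log n) + E) := by
            rw [Real.exp_add, Real.exp_add, Real.exp_add, Real.exp_log two_pos,
              Real.exp_log hn0]
            ring
      _ < 1 := by
            rw [← Real.exp_zero]
            apply Real.exp_lt_exp.2
            have hA : 54 * (0.6931471803 : ℝ) ≤ (8 * Real.exp 1 ^ 2 - 2) * Real.log n :=
              mul_le_mul (by nlinarith) hlog2n.le (by norm_num) (by nlinarith)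
            have hlog2lt := Real.log_two_lt_d9
            have hA' : (8 * Real.exp 1 ^ 2 - 2) * Real.log n
                = 8 * Real.exp 1 ^ 2 * Real.log n - 2 * Real.log n := by ring
            linarith [hE_le, hA, hlog2lt]
    have hBlt : (Measure.pi fun _ : Fin d => μ) B < 1 := lt_of_le_of_lt hBle hnum
    have hvex : ∃ v, v ∉ B := by
      by_contra h
      push_neg at h
      have hBu : B = Set.univ := Set.eq_univ_of_forall h
      rw [hBu, measure_univ] at hBlt
      exact lt_irrefl _ hBlt
    obtain ⟨v, hv⟩ := hvex
    rw [hB_def] at hv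
    simp only [Set.mem_iUnion, Set.mem_union, Set.mem_setOf_eq, not_exists, not_or,
      not_le] at hv
    have hvb : ∀ i j, |(∑ s, f i j (v s)) - (d : ℝ) * c i j| ≤ (d : ℝ) * ε := by
      intro i j
      obtain ⟨h1, h2⟩ := hv i j
      have hsum : ∑ s, g i j (v s) = (∑ s, f i j (v s)) - (d : ℝ) * c i j := by
        calc ∑ s, g i j (v s) = ∑ s : Fin d, (f i j (v s) - c i j) := rfl
        _ = (∑ s, f i j (v s)) - (d : ℝ) * c i j := by
            rw [Finset.sum_sub_distrib, Finset.sum_const, Finset.card_univ, Fintype.card_fin,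
              nsmul_eq_mul]
      have hsum' : ∑ s, -(g i j (v s)) = -((∑ s, f i j (v s)) - (d : ℝ) * c i j) := by
        rw [Finset.sum_neg_distrib, hsum]
      rw [hsum] at h1
      rw [hsum'] at h2
      exact abs_le.2 ⟨by linarith, by linarith⟩
    set k : ℝ := ((d : ℝ)⁻¹) ^ (1 / p) with hk_def
    have hk0 : 0 ≤ k := Real.rpow_nonneg (by positivity) _
    refine ⟨d, fun i s => z i (v s) * k, hdD, ?_⟩
    intro i j
    simp only [hcx]
    have hsum_eq : ∑ s : Fin d, |z i (v s) * k - z j (v s) * k| ^ p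
        = (∑ s, f i j (v s)) / (d : ℝ) := by
      have hterm : ∀ s : Fin d, |z i (v s) * k - z j (v s) * k| ^ p
          = f i j (v s) * (d : ℝ)⁻¹ := by
        intro s
        rw [← sub_mul, abs_mul, abs_of_nonneg hk0,
          Real.mul_rpow (abs_nonneg _) hk0, hk_def,
          ← Real.rpow_mul (by positivity), one_div, inv_mul_cancel₀ hp0, Real.rpow_one]
      calc ∑ s : Fin d, |z i (v s) * k - z j (v s) * k| ^ p
          = ∑ s, f i j (v s) * (d : ℝ)⁻¹ := Finset.sum_congr rfl fun s _ => hterm s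
      _ = (∑ s, f i j (v s)) * (d : ℝ)⁻¹ := (Finset.sum_mul _ _ _).symm
      _ = (∑ s, f i j (v s)) / (d : ℝ) := (div_eq_mul_inv _ _).symm
    rw [hsum_eq]
    obtain ⟨hv1, hv2⟩ := abs_le.1 (hvb i j)
    constructor
    · rw [le_div_iff₀ hd0]
      nlinarith
    · rw [div_le_iff₀ hd0]
      nlinarith
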